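/- arXiv:1505.00485 — 3 statements merged into one kernel-verified Lean document; each statement's English description precedes it below -/
import Mathlib

section
/- Let Λ be a strongly connected finite k-graph with Perron–Frobenius measure M on the infinite path space Λ^∞. For every λ ∈ Λ, the Radon–Nikodym derivative of M∘σ_λ with respect to M on the cylinder set Z(s(λ)) is the constant ρ(Λ)^{−d(λ)}; that is, for every ν ∈ Λ with r(ν)=s(λ), M(Z(λν)) = ρ(Λ)^{−d(λ)}·M(Z(ν)). -/
open MeasureTheory

/-- A (small, combinatorial) model of a higher-rank graph (`k`-graph): a category-like
structure with vertices `V`, paths (morphisms) `P`, range and source maps, a degree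
functor `d : P → ℕᵏ`, identities `vert`, partially defined composition, and the unique
factorization property. -/
structure KGraph (k : ℕ) where
  V : Type
  P : Type
  r : P → V
  s : P → V
  d : P → (Fin k → ℕ)
  vert : V → P
  comp : (l m : P) → s l = r m → P
  r_vert : ∀ v, r (vert v) = v
  s_vert : ∀ v, s (vert v) = v
  d_vert : ∀ v, d (vert v) = 0
  vert_inj : Function.Injective vert
  r_comp : ∀ l m h, r (comp l m h) = r l
  s_comp : ∀ l m h, s (comp l m h) = s m
  d_comp : ∀ l m h, d (comp l m h) = d l + d m
  comp_vert_left : ∀ l, comp (vert (r l)) l (s_vert (r l)) = l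
  comp_vert_right : ∀ l, comp l (vert (s l)) ((r_vert (s l)).symm) = l
  comp_assoc : ∀ l m n (h1 : s l = r m) (h2 : s m = r n),
    comp (comp l m h1) n ((s_comp l m h1).trans h2) =
      comp l (comp m n h2) (h1.trans (r_comp m n h2).symm)
  factor : ∀ (l : P) (m n : Fin k → ℕ), d l = m + n →
    ∃! q : P × P, ∃ h : s q.1 = r q.2, comp q.1 q.2 h = l ∧ d q.1 = m ∧ d q.2 = n

namespace KGraph

variable {k : ℕ}

/-- `Λ` is finite: each `Λⁿ` is a finite set. -/
def IsRowFinite (G : KGraph k) : Prop := ∀ n : Fin k → ℕ, {l : G.P | G.d l = n}.Finite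

/-- `Λ` has no sources: `vΛⁿ ≠ ∅` for every vertex `v` and degree `n`. -/
def NoSources (G : KGraph k) : Prop :=
  ∀ (v : G.V) (n : Fin k → ℕ), ∃ l : G.P, G.r l = v ∧ G.d l = n

/-- `Λ` is strongly connected: `vΛw ≠ ∅` for all vertices `v, w`. -/
def StronglyConnected (G : KGraph k) : Prop :=
  ∀ v w : G.V, ∃ l : G.P, G.r l = v ∧ G.s l = w

/-- The `i`-th vertex adjacency matrix: `Aᵢ(v,w)` is the number of paths of degree
`eᵢ` from `w` to `v`. -/
noncomputable def vertexMatrix (G : KGraph k) (i : Fin k) (v w : G.V) : ℕ :=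
  Nat.card {l : G.P // G.d l = Pi.single i 1 ∧ G.r l = v ∧ G.s l = w}

/-- An infinite path in the `k`-graph `G`: a degree-preserving, composition-compatible
assignment of a path `x(p,q)` to every pair `p ≤ q` in `ℕᵏ` (a functor `Ω_k → Λ`). -/
structure InfPath (G : KGraph k) where
  seg : (p q : Fin k → ℕ) → p ≤ q → G.P
  d_seg : ∀ p q h, G.d (seg p q h) = fun i => q i - p i
  s_r_seg : ∀ p q m (h1 : p ≤ q) (h2 : q ≤ m), G.s (seg p q h1) = G.r (seg q m h2)
  comp_seg : ∀ p q m (h1 : p ≤ q) (h2 : q ≤ m),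
    G.comp (seg p q h1) (seg q m h2) (s_r_seg p q m h1 h2) = seg p m (h1.trans h2)

/-- The cylinder set `Z(λ) = {x ∈ Λ^∞ : x(0, d(λ)) = λ}`. -/
def Z (G : KGraph k) (l : G.P) : Set G.InfPath :=
  {x | x.seg 0 (G.d l) (fun i => Nat.zero_le _) = l}

end KGraph


/-- Let `Λ` be a strongly connected finite `k`-graph with Perron–Frobenius measure `M`
on `Λ^∞` (determined by `M(Z(λ)) = ρ(Λ)^{−d(λ)}·x^Λ_{s(λ)}`, where `x^Λ` is the positive
unimodular common Perron–Frobenius eigenvector of the vertex matrices and `ρ(Λ)` the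
vector of their spectral radii). Then for every `λ`, the Radon–Nikodym derivative of
`M ∘ σ_λ` is the constant `ρ(Λ)^{−d(λ)}` on `Z(s(λ))`: for every `ν` with `r(ν) = s(λ)`,
`M(Z(λν)) = ρ(Λ)^{−d(λ)} · M(Z(ν))`. -/
theorem stmt_8 {k : ℕ} (G : KGraph k) [Fintype G.V]
    (hfin : G.IsRowFinite) (hsc : G.StronglyConnected)
    [MeasurableSpace G.InfPath] (M : Measure G.InfPath) [IsProbabilityMeasure M]
    (xL : G.V → ℝ) (hxpos : ∀ v, 0 < xL v) (hx1 : ∑ v, xL v = 1)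
    (ρ : Fin k → ℝ) (hρpos : ∀ i, 0 < ρ i)
    (heig : ∀ (i : Fin k) (v : G.V),
      ∑ w, (G.vertexMatrix i v w : ℝ) * xL w = ρ i * xL v)
    (hM : ∀ l : G.P,
      M (G.Z l) = ENNReal.ofReal ((∏ i, ρ i ^ (G.d l i))⁻¹ * xL (G.s l))) :
    ∀ (l m : G.P) (h : G.s l = G.r m),
      M (G.Z (G.comp l m h)) =
        ENNReal.ofReal (∏ i, ρ i ^ (G.d l i))⁻¹ * M (G.Z m) := by
  intro l m h
  have hprodpos : ∀ n : Fin k → ℕ, 0 < ∏ i, ρ i ^ (n i) := fun n =>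
    Finset.prod_pos fun i _ => pow_pos (hρpos i) _
  rw [hM, hM, G.s_comp, G.d_comp,
    ← ENNReal.ofReal_mul (by exact inv_nonneg.mpr (hprodpos (G.d l)).le)]
  congr 1
  have : ∏ i, ρ i ^ ((G.d l + G.d m) i) = (∏ i, ρ i ^ (G.d l i)) * ∏ i, ρ i ^ (G.d m i) := by
    rw [← Finset.prod_mul_distrib]
    exact Finset.prod_congr rfl fun i _ => by simp [pow_add]
  rw [this, mul_inv]
  ring
end

section
/- Fix a vertex v of a strongly connected finite k-graph Λ, let D_v = {λ ∈ Λ : d(λ) = (1,…,1), r(λ) = v} with |D_v| = d_v, and equip ℂ^{D_v} with the inner product ⟨u,w⟩ = Σ_{λ∈D_v} conj(u_λ)·w_λ·ρ(Λ)^{(−1,…,−1)}·x^Λ_{s(λ)}. Let {c^{m,v}}_{m=1}^{d_v−1} be an orthonormal basis of the orthogonal complement of (1,…,1). Then the functions f^{m,v} = Σ_{λ∈D_v} c^{m,v}_λ·Θ_λ satisfy ∫ f^{m,v} dM = 0 and ∫ f^{m,v}·conj(f^{m',v'}) dM = δ_{v,v'}·δ_{m,m'}. -/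
/-!
Cylinders of equal degree are disjoint, so `f^{m,v} · conj f^{m',v'}` is again a wavelet, with
coefficients `c^{m,v}_λ · conj c^{m',v'}_λ`. Integrating a wavelet `Σ a_λ Θ_λ` against `M` gives
`Σ a_λ M(Z(λ))`, and for `d(λ) = (1,…,1)` the mass `M(Z(λ))` is exactly the weight of the inner
product on `ℂ^{D_v}`. Both integrals are therefore inner products in `ℂ^{D_v}`: `∫ f^{m,v} dM` is
the conjugate of `⟨c^{m,v}, 1⟩ = 0`, and `∫ f^{m,v} conj f^{m',v'} dM` is `⟨c^{m',v'}, c^{m,v}⟩`,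
which vanishes for `v ≠ v'` because then the supports `D_v` and `D_{v'}` are disjoint.
-/

open MeasureTheory

/-- The weight `ρ(Λ)^{(−1,…,−1)}·x^Λ_{s(λ)}` appearing in the inner product on `ℂ^{D_v}`. -/
noncomputable def KGraph.wt {k : ℕ} (G : KGraph k) (ρ : Fin k → ℝ) (xL : G.V → ℝ)
    (l : G.P) : ℂ :=
  (((∏ i, ρ i)⁻¹ * xL (G.s l) : ℝ) : ℂ)

/-- `d_v = |D_v|`, the number of paths of degree `(1,…,1)` with range `v`. -/
noncomputable def KGraph.dv {k : ℕ} (G : KGraph k) (v : G.V) : ℕ :=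
  Nat.card {l : G.P // G.d l = (fun _ => 1) ∧ G.r l = v}

/-- The wavelet function `f = Σ_λ c_λ Θ_λ` attached to a coefficient vector `c`. -/
noncomputable def KGraph.wavelet {k : ℕ} (G : KGraph k) (c : G.P → ℂ) :
    G.InfPath → ℂ :=
  fun x => ∑ᶠ l : G.P, c l * Set.indicator (G.Z l) (fun _ => (1 : ℂ)) x

lemma Complex.conj_finsum {α : Type*} (f : α → ℂ) :
    starRingEnd ℂ (∑ᶠ i, f i) = ∑ᶠ i, starRingEnd ℂ (f i) :=
  (starRingEnd ℂ).toAddMonoidHom.map_finsum_of_injective (RingHom.injective _) f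

namespace KGraph

variable {k : ℕ} {G : KGraph k}

lemma InfPath.seg_congr (x : G.InfPath) {p q q' : Fin k → ℕ} (hq : q = q') (h : p ≤ q)
    (h' : p ≤ q') : x.seg p q h = x.seg p q' h' := by
  subst hq; rfl

lemma mem_Z_seg (x : G.InfPath) (n : Fin k → ℕ) (h : 0 ≤ n) : x ∈ G.Z (x.seg 0 n h) := by
  have hd : G.d (x.seg 0 n h) = n := by simp [x.d_seg]
  exact x.seg_congr hd _ _

lemma eq_seg_of_mem_Z {x : G.InfPath} {l : G.P} {n : Fin k → ℕ} (hl : G.d l = n) (h : 0 ≤ n)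
    (hx : x ∈ G.Z l) : l = x.seg 0 n h :=
  hx.symm.trans (x.seg_congr hl _ _)

/-- Among the cylinders of degree `n`, `x` lies in `Z(x(0, n))` only. -/
lemma wavelet_eq_apply_seg {c : G.P → ℂ} {n : Fin k → ℕ} (hc : ∀ l, c l ≠ 0 → G.d l = n)
    (x : G.InfPath) : G.wavelet c x = c (x.seg 0 n fun _ => Nat.zero_le _) := by
  unfold wavelet
  rw [finsum_eq_single _ (x.seg 0 n fun _ => Nat.zero_le _)]
  · simp [Set.indicator_of_mem (mem_Z_seg x n _)]
  · intro l hl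
    by_cases hcl : c l = 0
    · simp [hcl]
    · have hx : x ∉ G.Z l := fun hx => hl (eq_seg_of_mem_Z (hc l hcl) _ hx)
      simp [Set.indicator_of_notMem hx]

lemma wavelet_mul_conj_wavelet {c c' : G.P → ℂ} {n : Fin k → ℕ}
    (hc : ∀ l, c l ≠ 0 → G.d l = n) (hc' : ∀ l, c' l ≠ 0 → G.d l = n) (x : G.InfPath) :
    G.wavelet c x * starRingEnd ℂ (G.wavelet c' x) =
      G.wavelet (fun l => c l * starRingEnd ℂ (c' l)) x := by
  have hcc' : ∀ l, c l * starRingEnd ℂ (c' l) ≠ 0 → G.d l = n :=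
    fun l h => hc l (left_ne_zero_of_mul h)
  rw [wavelet_eq_apply_seg hc, wavelet_eq_apply_seg hc', wavelet_eq_apply_seg hcc']

lemma integral_wavelet [MeasurableSpace G.InfPath] (M : Measure G.InfPath) [IsFiniteMeasure M]
    (hZ : ∀ l, MeasurableSet (G.Z l)) {c : G.P → ℂ} (hc : (Function.support c).Finite) :
    ∫ x, G.wavelet c x ∂M = ∑ᶠ l, c l * M.real (G.Z l) := by
  have hsupp {f : G.P → ℂ} : Function.support (fun l => c l * f l) ⊆ hc.toFinset :=
    fun l hl => hc.mem_toFinset.2 (left_ne_zero_of_mul hl)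
  simp only [wavelet, finsum_eq_sum_of_support_subset _ hsupp]
  rw [integral_finsetSum _ fun l _ => ((integrable_const _).indicator (hZ l)).const_mul _]
  refine Finset.sum_congr rfl fun l _ => ?_
  rw [integral_const_mul, integral_indicator_const _ (hZ l), Complex.real_smul, mul_one]

end KGraph

theorem stmt_11_general {k : ℕ} (G : KGraph k) [DecidableEq G.V]
    (hfin : G.IsRowFinite)
    [MeasurableSpace G.InfPath] (M : Measure G.InfPath) [IsProbabilityMeasure M]
    (hZmeas : ∀ l : G.P, MeasurableSet (G.Z l))
    (xL : G.V → ℝ) (hxpos : ∀ v, 0 < xL v)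
    (ρ : Fin k → ℝ) (hρpos : ∀ i, 0 < ρ i)
    (hM : ∀ l : G.P,
      M (G.Z l) = ENNReal.ofReal ((∏ i, ρ i ^ (G.d l i))⁻¹ * xL (G.s l)))
    (c : G.V → ℕ → G.P → ℂ)
    (hsupp : ∀ v m l, c v m l ≠ 0 → G.d l = (fun _ => 1) ∧ G.r l = v)
    (hperp : ∀ v m, m < G.dv v - 1 →
      ∑ᶠ l : G.P, (starRingEnd ℂ) (c v m l) * G.wt ρ xL l = 0)
    (honb : ∀ v m m', m < G.dv v - 1 → m' < G.dv v - 1 →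
      ∑ᶠ l : G.P, (starRingEnd ℂ) (c v m l) * c v m' l * G.wt ρ xL l =
        if m = m' then 1 else 0) :
    (∀ v m, m < G.dv v - 1 → ∫ x, G.wavelet (c v m) x ∂M = 0) ∧
    (∀ v v' m m', m < G.dv v - 1 → m' < G.dv v' - 1 →
      ∫ x, G.wavelet (c v m) x * (starRingEnd ℂ) (G.wavelet (c v' m') x) ∂M =
        if v = v' ∧ m = m' then 1 else 0) := by
  have hdeg v m l (h : c v m l ≠ 0) : G.d l = fun _ => 1 := (hsupp v m l h).1
  have hwt l (hl : G.d l = fun _ => 1) : (M.real (G.Z l) : ℂ) = G.wt ρ xL l := by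
    have hprod : ∏ i, ρ i ^ G.d l i = ∏ i, ρ i := by simp [hl]
    have hnonneg : 0 ≤ (∏ i, ρ i)⁻¹ * xL (G.s l) :=
      mul_nonneg (inv_nonneg.2 (Finset.prod_nonneg fun i _ => (hρpos i).le)) (hxpos _).le
    rw [measureReal_def, hM, hprod, ENNReal.toReal_ofReal hnonneg, KGraph.wt]
  have hint (a : G.P → ℂ) (ha : ∀ l, a l ≠ 0 → G.d l = fun _ => 1) :
      ∫ x, G.wavelet a x ∂M = ∑ᶠ l, a l * G.wt ρ xL l := by
    rw [KGraph.integral_wavelet M hZmeas ((hfin _).subset ha)]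
    refine finsum_congr fun l => ?_
    by_cases hal : a l = 0
    · simp [hal]
    · rw [hwt l (ha l hal)]
  refine ⟨fun v m hm => ?_, fun v v' m m' hm hm' => ?_⟩
  · rw [hint _ (hdeg v m), ← Complex.conj_conj (∑ᶠ l, _), Complex.conj_finsum]
    simpa [KGraph.wt] using congrArg (starRingEnd ℂ) (hperp v m hm)
  · simp only [KGraph.wavelet_mul_conj_wavelet (hdeg v m) (hdeg v' m')]
    rw [hint _ fun l h => hdeg v m l (left_ne_zero_of_mul h)]
    by_cases hv : v = v'
    · subst hv
      convert honb v m' m hm' hm using 1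
      · exact finsum_congr fun l => by ring
      · simp [eq_comm]
    · rw [if_neg fun h => hv h.1]
      refine finsum_eq_zero_of_forall_eq_zero fun l => ?_
      have hdisj : c v m l = 0 ∨ c v' m' l = 0 := by
        by_contra! h
        exact hv ((hsupp v m l h.1).2.symm.trans (hsupp v' m' l h.2).2)
      rcases hdisj with h | h <;> simp [h]

/-- Let `Λ` be a strongly connected finite `k`-graph with Perron–Frobenius measure `M`.
For each vertex `v` let `{c^{m,v}}_{m=1}^{d_v−1}` (here indexed by `m < d_v − 1`) be an
orthonormal basis of the orthogonal complement of `(1,…,1)` in `ℂ^{D_v}` with the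
weighted inner product `⟨u,w⟩ = Σ_λ conj(u_λ) w_λ ρ(Λ)^{(−1,…,−1)} x^Λ_{s(λ)}`. Then the
functions `f^{m,v} = Σ_{λ∈D_v} c^{m,v}_λ Θ_λ` satisfy `∫ f^{m,v} dM = 0` and
`∫ f^{m,v} conj(f^{m',v'}) dM = δ_{v,v'} δ_{m,m'}`. -/
theorem stmt_11 {k : ℕ} (G : KGraph k) [Fintype G.V] [DecidableEq G.V]
    (hfin : G.IsRowFinite) (hsc : G.StronglyConnected)
    [MeasurableSpace G.InfPath] (M : Measure G.InfPath) [IsProbabilityMeasure M]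
    (hZmeas : ∀ l : G.P, MeasurableSet (G.Z l))
    (xL : G.V → ℝ) (hxpos : ∀ v, 0 < xL v) (hx1 : ∑ v, xL v = 1)
    (ρ : Fin k → ℝ) (hρpos : ∀ i, 0 < ρ i)
    (heig : ∀ (i : Fin k) (v : G.V),
      ∑ w, (G.vertexMatrix i v w : ℝ) * xL w = ρ i * xL v)
    (hM : ∀ l : G.P,
      M (G.Z l) = ENNReal.ofReal ((∏ i, ρ i ^ (G.d l i))⁻¹ * xL (G.s l)))
    (c : G.V → ℕ → G.P → ℂ)
    (hsupp : ∀ v m l, c v m l ≠ 0 → G.d l = (fun _ => 1) ∧ G.r l = v)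
    (hperp : ∀ v m, m < G.dv v - 1 →
      ∑ᶠ l : G.P, (starRingEnd ℂ) (c v m l) * G.wt ρ xL l = 0)
    (honb : ∀ v m m', m < G.dv v - 1 → m' < G.dv v - 1 →
      ∑ᶠ l : G.P, (starRingEnd ℂ) (c v m l) * c v m' l * G.wt ρ xL l =
        if m = m' then 1 else 0) :
    (∀ v m, m < G.dv v - 1 → ∫ x, G.wavelet (c v m) x ∂M = 0) ∧
    (∀ v v' m m', m < G.dv v - 1 → m' < G.dv v' - 1 →
      ∫ x, G.wavelet (c v m) x * (starRingEnd ℂ) (G.wavelet (c v' m') x) ∂M =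
        if v = v' ∧ m = m' then 1 else 0) :=
  stmt_11_general G hfin M hZmeas xL hxpos ρ hρpos hM c hsupp hperp honb
end

section
/- Let Λ be a strongly connected finite k-graph with Perron–Frobenius measure M on Λ^∞, and let S_λ be the operators of the associated Λ-semibranching representation, so S_λ f^{m,v} = ρ(Λ)^{d(λ)/2}·Σ_{μ∈D_v} c^{m,v}_μ·Θ_{λμ} when s(λ) = v. Then for λ ∈ C_{j,v} and λ' ∈ C_{j,v'} with d(λ) = d(λ') = (j,…,j): ∫ S_λ f^{m,v}·conj(S_{λ'} f^{m',v'}) dM = δ_{λ,λ'}·δ_{m,m'}. Moreover, for λ ∈ C_{j,v} and λ' ∈ C_{i,v'} with j > i ≥ 0, the integral ∫ S_λ f^{m,v}·conj(S_{λ'} f^{m',v'}) dM = 0. -/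
open MeasureTheory

/-- The shifted wavelet `S_λ f = ρ(Λ)^{d(λ)/2} Σ_{μ ∈ s(λ)Λ} c_μ Θ_{λμ}` attached to a
path `λ` and a coefficient vector `c` (supported on `D_{s(λ)}`). -/
noncomputable def KGraph.swavelet {k : ℕ} (G : KGraph k) (ρ : Fin k → ℝ) (l : G.P)
    (c : G.P → ℂ) : G.InfPath → ℂ :=
  fun x => ((Real.sqrt (∏ i, ρ i ^ (G.d l i)) : ℝ) : ℂ) *
    ∑ᶠ m : {m : G.P // G.s l = G.r m},
      c m.1 * Set.indicator (G.Z (G.comp l m.1 m.2)) (fun _ => (1 : ℂ)) x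

/-!
Expand `S_λ a = ρ^{d(λ)/2} Σ_μ a_μ Θ_{λμ}`; the integral of `S_λ a · conj (S_λ' b)` is then a
double sum of `a_μ conj (b_μ') M(Z(λμ) ∩ Z(λ'μ'))`. By unique factorization, cylinders of distinct
paths of equal degree are disjoint, so for `d(λ) = d(λ')` only the diagonal `λ = λ'`, `μ = μ'`
survives, and there `M(Z(λμ)) = ρ^{-d(λ)} · ρ^{(-1,…,-1)} x_{s(μ)}` turns the sum into the weighted
inner product of the coefficient vectors. If `d(λ') < d(λ)`, each `Z(λ'μ')` either contains `Z(λ)`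
or misses it, so each term is a multiple of `Σ_μ a_μ M(Z(λμ)) = ρ^{-d(λ)} ⟨1, a⟩ = 0`.
-/

lemma integral_sum_indicator_mul_conj_sum_indicator {Ω ι κ : Type*} [MeasurableSpace Ω]
    (μ : Measure Ω) [IsFiniteMeasure μ]
    (s : Finset ι) (t : Finset κ) {A : ι → Set Ω} {B : κ → Set Ω}
    (hA : ∀ i, MeasurableSet (A i)) (hB : ∀ j, MeasurableSet (B j)) (a : ι → ℂ) (b : κ → ℂ) :
    ∫ x, (∑ i ∈ s, a i * (A i).indicator (fun _ => 1) x) *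
        starRingEnd ℂ (∑ j ∈ t, b j * (B j).indicator (fun _ => 1) x) ∂μ =
      ∑ i ∈ s, ∑ j ∈ t, a i * starRingEnd ℂ (b j) * μ.real (A i ∩ B j) := by
  have hint : ∀ i j, Integrable ((A i ∩ B j).indicator fun _ => (1 : ℂ)) μ := fun i j =>
    (integrable_const _).indicator ((hA i).inter (hB j))
  have hprod : ∀ x, (∑ i ∈ s, a i * (A i).indicator (fun _ => 1) x) *
      starRingEnd ℂ (∑ j ∈ t, b j * (B j).indicator (fun _ => 1) x) =
      ∑ i ∈ s, ∑ j ∈ t, a i * starRingEnd ℂ (b j) * (A i ∩ B j).indicator (fun _ => 1) x := by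
    intro x
    simp only [map_sum, map_mul, Finset.sum_mul_sum]
    refine Finset.sum_congr rfl fun i _ => Finset.sum_congr rfl fun j _ => ?_
    by_cases hi : x ∈ A i <;> by_cases hj : x ∈ B j <;> simp [hi, hj]
  simp_rw [hprod]
  rw [integral_finsetSum _ fun i _ => integrable_finsetSum _ fun j _ => (hint i j).const_mul _]
  refine Finset.sum_congr rfl fun i _ => ?_
  rw [integral_finsetSum _ fun j _ => (hint i j).const_mul _]
  refine Finset.sum_congr rfl fun j _ => ?_
  rw [integral_const_mul, integral_indicator_const _ ((hA i).inter (hB j)), Complex.real_smul,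
    mul_one]

namespace KGraph

variable {k : ℕ} {G : KGraph k}

lemma eq_of_comp_eq_comp {a b a' b' : G.P} {hs : G.s a = G.r b} {hs' : G.s a' = G.r b'}
    (h : G.comp a b hs = G.comp a' b' hs') (hd : G.d a = G.d a') : a = a' ∧ b = b' := by
  have hdb : G.d b = G.d b' := by
    have := congrArg G.d h
    rw [G.d_comp, G.d_comp, hd] at this
    exact add_left_cancel this
  obtain ⟨q, -, huniq⟩ := G.factor _ (G.d a) (G.d b) (G.d_comp a b hs)
  have hab := huniq (a, b) ⟨hs, rfl, rfl, rfl⟩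
  have hab' := huniq (a', b') ⟨hs', h.symm, hd.symm, hdb.symm⟩
  simpa using hab.trans hab'.symm

lemma seg_eq_of_mem_Z {l : G.P} {x y : G.InfPath} (hx : x ∈ G.Z l) (hy : y ∈ G.Z l)
    {q : Fin k → ℕ} (hq : q ≤ G.d l) :
    x.seg 0 q zero_le = y.seg 0 q zero_le := by
  have hcx := (x.comp_seg 0 q (G.d l) zero_le hq).trans hx
  have hcy := (y.comp_seg 0 q (G.d l) zero_le hq).trans hy
  exact (eq_of_comp_eq_comp (hcx.trans hcy.symm) (by rw [x.d_seg, y.d_seg])).1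

lemma Z_comp_subset {a b : G.P} (hs : G.s a = G.r b) : G.Z (G.comp a b hs) ⊆ G.Z a := by
  intro x hx
  have hle : G.d a ≤ G.d (G.comp a b hs) := by
    rw [G.d_comp]; exact le_self_add
  have hc := (x.comp_seg 0 (G.d a) _ zero_le hle).trans hx
  exact (eq_of_comp_eq_comp hc (by rw [x.d_seg]; simp)).1

lemma eq_of_mem_Z {e e' : G.P} {x : G.InfPath} (h : x ∈ G.Z e) (h' : x ∈ G.Z e')
    (hd : G.d e = G.d e') : e = e' := by
  have h2 : x.seg 0 (G.d e') zero_le = e' := h'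
  rw [← hd] at h2
  exact h.symm.trans h2

lemma Z_subset_or_disjoint {l η : G.P} (hd : G.d η ≤ G.d l) :
    G.Z l ⊆ G.Z η ∨ Disjoint (G.Z l) (G.Z η) := by
  by_cases h : ∃ x, x ∈ G.Z l ∧ x ∈ G.Z η
  · obtain ⟨x, hxl, hxη⟩ := h
    left
    intro y hy
    exact (seg_eq_of_mem_Z hy hxl hd).trans hxη
  · exact Or.inr (Set.disjoint_left.2 fun x hxl hxη => h ⟨x, hxl, hxη⟩)

def cylComp (G : KGraph k) (l μ : G.P) : Set G.InfPath :=
  ⋃ h : G.s l = G.r μ, G.Z (G.comp l μ h)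

lemma cylComp_of_comp {l μ : G.P} (h : G.s l = G.r μ) : G.cylComp l μ = G.Z (G.comp l μ h) :=
  iSup_pos h

lemma cylComp_of_not_comp {l μ : G.P} (h : ¬G.s l = G.r μ) : G.cylComp l μ = ∅ :=
  iSup_neg h

lemma cylComp_subset_Z (l μ : G.P) : G.cylComp l μ ⊆ G.Z l :=
  Set.iUnion_subset fun h => Z_comp_subset h

lemma measurableSet_cylComp [MeasurableSpace G.InfPath]
    (hZ : ∀ l : G.P, MeasurableSet (G.Z l)) (l μ : G.P) : MeasurableSet (G.cylComp l μ) :=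
  MeasurableSet.iUnion fun _ => hZ _

lemma disjoint_cylComp {l l' μ μ' : G.P} (hl : G.d l = G.d l') (hμ : G.d μ = G.d μ')
    (hne : (l, μ) ≠ (l', μ')) : Disjoint (G.cylComp l μ) (G.cylComp l' μ') := by
  refine Set.disjoint_left.2 fun x hx hx' => hne ?_
  obtain ⟨h, hx⟩ := Set.mem_iUnion.1 hx
  obtain ⟨h', hx'⟩ := Set.mem_iUnion.1 hx'
  have hcomp := eq_of_mem_Z hx hx' (by rw [G.d_comp, G.d_comp, hl, hμ])
  obtain ⟨rfl, rfl⟩ := eq_of_comp_eq_comp hcomp hl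
  rfl

lemma Z_subset_or_disjoint_cylComp {l l' μ' : G.P} (hd : G.d l' + G.d μ' ≤ G.d l) :
    G.Z l ⊆ G.cylComp l' μ' ∨ Disjoint (G.Z l) (G.cylComp l' μ') := by
  by_cases h : G.s l' = G.r μ'
  · rw [cylComp_of_comp h]
    exact Z_subset_or_disjoint (by rwa [G.d_comp])
  · rw [cylComp_of_not_comp h]
    exact Or.inr (Set.disjoint_empty _)

def HasCylinderMeasures (G : KGraph k) [MeasurableSpace G.InfPath] (M : Measure G.InfPath)
    (ρ : Fin k → ℝ) (xL : G.V → ℝ) : Prop :=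
  ∀ l : G.P, M (G.Z l) = ENNReal.ofReal ((∏ i, ρ i ^ (G.d l i))⁻¹ * xL (G.s l))

lemma measureReal_cylComp [MeasurableSpace G.InfPath] {M : Measure G.InfPath} {ρ : Fin k → ℝ}
    {xL : G.V → ℝ} (hρ : ∀ i, 0 ≤ ρ i) (hxL : ∀ v, 0 ≤ xL v)
    (hM : G.HasCylinderMeasures M ρ xL)
    {l μ : G.P} (h : G.s l = G.r μ) (hμ : G.d μ = fun _ => 1) :
    (M.real (G.cylComp l μ) : ℂ) = ((∏ i, ρ i ^ G.d l i)⁻¹ : ℝ) * G.wt ρ xL μ := by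
  have hprod : ∏ i, ρ i ^ G.d (G.comp l μ h) i = (∏ i, ρ i ^ G.d l i) * ∏ i, ρ i := by
    simp only [G.d_comp, hμ, Pi.add_apply, pow_succ, Finset.prod_mul_distrib]
  rw [cylComp_of_comp h, measureReal_def, hM (G.comp l μ h), ENNReal.toReal_ofReal (mul_nonneg
    (inv_nonneg.2 (Finset.prod_nonneg fun i _ => pow_nonneg (hρ i) _)) (hxL _)), hprod, G.s_comp,
    wt]
  push_cast
  rw [mul_inv]
  ring

/-- `a` is a vector of `ℂ^{D_v}`, extended by zero to all paths. -/
def SupportedOnD (G : KGraph k) (v : G.V) (a : G.P → ℂ) : Prop :=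
  ∀ μ, a μ ≠ 0 → G.d μ = (fun _ => 1) ∧ G.r μ = v

noncomputable def weightedInner (G : KGraph k) (ρ : Fin k → ℝ) (xL : G.V → ℝ) (a b : G.P → ℂ) : ℂ :=
  ∑ᶠ μ, starRingEnd ℂ (a μ) * b μ * G.wt ρ xL μ

noncomputable def pathsOfDegree (hfin : G.IsRowFinite) (n : Fin k → ℕ) : Finset G.P :=
  (hfin n).toFinset

lemma mem_pathsOfDegree {hfin : G.IsRowFinite} {n : Fin k → ℕ} {μ : G.P} :
    μ ∈ pathsOfDegree hfin n ↔ G.d μ = n :=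
  Set.Finite.mem_toFinset _

lemma SupportedOnD.mul_right {v : G.V} {a : G.P → ℂ} (ha : G.SupportedOnD v a) (b : G.P → ℂ) :
    G.SupportedOnD v fun μ => a μ * b μ :=
  fun μ h => ha μ (left_ne_zero_of_mul h)

lemma conj_weightedInner (hfin : G.IsRowFinite) {ρ : Fin k → ℝ} {xL : G.V → ℝ} {v : G.V}
    {a : G.P → ℂ} (ha : G.SupportedOnD v a) (b : G.P → ℂ) :
    starRingEnd ℂ (G.weightedInner ρ xL a b) =
      ∑ μ ∈ pathsOfDegree hfin (fun _ => 1), a μ * starRingEnd ℂ (b μ) * G.wt ρ xL μ := by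
  rw [weightedInner, finsum_eq_sum_of_support_subset _ (s := pathsOfDegree hfin fun _ => 1),
    map_sum]
  · simp [wt]
  · intro μ hμ
    have haμ : a μ ≠ 0 := fun h => hμ (by simp [h])
    exact mem_pathsOfDegree.2 (ha μ haμ).1

lemma swavelet_eq_sum (hfin : G.IsRowFinite) (ρ : Fin k → ℝ) {l : G.P} {a : G.P → ℂ}
    (ha : G.SupportedOnD (G.s l) a) (x : G.InfPath) :
    G.swavelet ρ l a x = ((Real.sqrt (∏ i, ρ i ^ G.d l i) : ℝ) : ℂ) *
      ∑ μ ∈ pathsOfDegree hfin (fun _ => 1), a μ * (G.cylComp l μ).indicator (fun _ => 1) x := by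
  unfold swavelet
  congr 1
  rw [← finsum_cond_eq_sum_of_cond_iff (p := fun μ => G.s l = G.r μ),
    ← finsum_subtype_eq_finsum_cond]
  · exact finsum_congr fun μ => by rw [cylComp_of_comp μ.2]
  · intro μ hμ
    obtain ⟨hd, hr⟩ := ha μ (left_ne_zero_of_mul hμ)
    simp [mem_pathsOfDegree, hd, hr]

section Integrals

variable [MeasurableSpace G.InfPath] {M : Measure G.InfPath} {ρ : Fin k → ℝ} {xL : G.V → ℝ}

lemma sum_mul_measureReal_cylComp (hρ : ∀ i, 0 ≤ ρ i) (hxL : ∀ v, 0 ≤ xL v)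
    (hM : G.HasCylinderMeasures M ρ xL)
    (s : Finset G.P) {l : G.P} {a : G.P → ℂ} (ha : G.SupportedOnD (G.s l) a) :
    ∑ μ ∈ s, a μ * M.real (G.cylComp l μ) =
      ((∏ i, ρ i ^ G.d l i)⁻¹ : ℝ) * ∑ μ ∈ s, a μ * G.wt ρ xL μ := by
  rw [Finset.mul_sum]
  refine Finset.sum_congr rfl fun μ _ => ?_
  by_cases h : a μ = 0
  · simp [h]
  · rw [measureReal_cylComp hρ hxL hM (ha μ h).2.symm (ha μ h).1]
    ring

lemma sum_mul_measureReal_cylComp_inter_eq_zero (hfin : G.IsRowFinite) (hρ : ∀ i, 0 ≤ ρ i)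
    (hxL : ∀ v, 0 ≤ xL v)
    (hM : G.HasCylinderMeasures M ρ xL)
    {l : G.P} {a : G.P → ℂ} (ha : G.SupportedOnD (G.s l) a) (hperp : G.weightedInner ρ xL a 1 = 0)
    {S : Set G.InfPath} (hS : G.Z l ⊆ S ∨ Disjoint (G.Z l) S) :
    ∑ μ ∈ pathsOfDegree hfin (fun _ => 1), a μ * M.real (G.cylComp l μ ∩ S) = 0 := by
  rcases hS with hS | hS
  · have hsum : ∑ μ ∈ pathsOfDegree hfin (fun _ => 1), a μ * G.wt ρ xL μ = 0 := by
      simpa [hperp] using (conj_weightedInner hfin (ρ := ρ) (xL := xL) ha 1).symm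
    rw [Finset.sum_congr rfl fun μ _ => by
      rw [Set.inter_eq_left.2 ((cylComp_subset_Z l μ).trans hS)],
      sum_mul_measureReal_cylComp hρ hxL hM _ ha, hsum, mul_zero]
  · refine Finset.sum_eq_zero fun μ _ => ?_
    rw [((hS.mono_left (cylComp_subset_Z l μ))).inter_eq]
    simp

lemma integral_swavelet_mul_conj (hfin : G.IsRowFinite) [IsFiniteMeasure M]
    (hZ : ∀ l : G.P, MeasurableSet (G.Z l)) {l l' : G.P} {a b : G.P → ℂ}
    (ha : G.SupportedOnD (G.s l) a) (hb : G.SupportedOnD (G.s l') b) :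
    ∫ x, G.swavelet ρ l a x * starRingEnd ℂ (G.swavelet ρ l' b x) ∂M =
      ((Real.sqrt (∏ i, ρ i ^ G.d l i) : ℝ) : ℂ) * ((Real.sqrt (∏ i, ρ i ^ G.d l' i) : ℝ) : ℂ) *
        ∑ μ ∈ pathsOfDegree hfin (fun _ => 1), ∑ μ' ∈ pathsOfDegree hfin (fun _ => 1),
          a μ * starRingEnd ℂ (b μ') * M.real (G.cylComp l μ ∩ G.cylComp l' μ') := by
  simp_rw [swavelet_eq_sum hfin ρ ha, swavelet_eq_sum hfin ρ hb, map_mul, Complex.conj_ofReal,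
    mul_mul_mul_comm _ (∑ μ ∈ _, _)]
  rw [integral_const_mul, integral_sum_indicator_mul_conj_sum_indicator _ _ _
    (measurableSet_cylComp hZ l) (measurableSet_cylComp hZ l')]

lemma integral_swavelet_mul_conj_self (hfin : G.IsRowFinite) [IsFiniteMeasure M]
    (hZ : ∀ l : G.P, MeasurableSet (G.Z l)) (hρ : ∀ i, 0 < ρ i) (hxL : ∀ v, 0 ≤ xL v)
    (hM : G.HasCylinderMeasures M ρ xL)
    {l : G.P} {a b : G.P → ℂ} (ha : G.SupportedOnD (G.s l) a) (hb : G.SupportedOnD (G.s l) b) :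
    ∫ x, G.swavelet ρ l a x * starRingEnd ℂ (G.swavelet ρ l b x) ∂M =
      starRingEnd ℂ (G.weightedInner ρ xL a b) := by
  have hdiag : ∀ μ ∈ pathsOfDegree hfin (fun _ => 1),
      ∑ μ' ∈ pathsOfDegree hfin (fun _ => 1),
        a μ * starRingEnd ℂ (b μ') * M.real (G.cylComp l μ ∩ G.cylComp l μ') =
      a μ * starRingEnd ℂ (b μ) * M.real (G.cylComp l μ) := by
    intro μ hμ
    rw [Finset.sum_eq_single_of_mem μ hμ, Set.inter_self]
    intro μ' hμ' hne
    rw [(disjoint_cylComp rfl ((mem_pathsOfDegree.1 hμ).trans (mem_pathsOfDegree.1 hμ').symm)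
      (by simpa using hne.symm)).inter_eq]
    simp
  have hP : (0 : ℝ) < ∏ i, ρ i ^ G.d l i := Finset.prod_pos fun i _ => pow_pos (hρ i) _
  rw [integral_swavelet_mul_conj hfin hZ ha hb, Finset.sum_congr rfl hdiag,
    sum_mul_measureReal_cylComp (fun i => (hρ i).le) hxL hM _ (ha.mul_right _),
    conj_weightedInner hfin ha, ← Complex.ofReal_mul, Real.mul_self_sqrt hP.le, ← mul_assoc,
    ← Complex.ofReal_mul, mul_inv_cancel₀ hP.ne', Complex.ofReal_one, one_mul]

lemma integral_swavelet_mul_conj_eq_zero_of_ne (hfin : G.IsRowFinite) [IsFiniteMeasure M]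
    (hZ : ∀ l : G.P, MeasurableSet (G.Z l)) {l l' : G.P} (hd : G.d l = G.d l') (hne : l ≠ l')
    {a b : G.P → ℂ} (ha : G.SupportedOnD (G.s l) a) (hb : G.SupportedOnD (G.s l') b) :
    ∫ x, G.swavelet ρ l a x * starRingEnd ℂ (G.swavelet ρ l' b x) ∂M = 0 := by
  rw [integral_swavelet_mul_conj hfin hZ ha hb]
  refine mul_eq_zero_of_right _ (Finset.sum_eq_zero fun μ hμ => Finset.sum_eq_zero fun μ' hμ' => ?_)
  rw [(disjoint_cylComp hd ((mem_pathsOfDegree.1 hμ).trans (mem_pathsOfDegree.1 hμ').symm)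
    fun h => hne (congrArg Prod.fst h)).inter_eq]
  simp

lemma integral_swavelet_mul_conj_eq_zero_of_lt (hfin : G.IsRowFinite) [IsFiniteMeasure M]
    (hZ : ∀ l : G.P, MeasurableSet (G.Z l)) (hρ : ∀ i, 0 ≤ ρ i) (hxL : ∀ v, 0 ≤ xL v)
    (hM : G.HasCylinderMeasures M ρ xL)
    {l l' : G.P} (hd : G.d l' + (fun _ => 1) ≤ G.d l)
    {a b : G.P → ℂ} (ha : G.SupportedOnD (G.s l) a) (hb : G.SupportedOnD (G.s l') b)
    (hperp : G.weightedInner ρ xL a 1 = 0) :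
    ∫ x, G.swavelet ρ l a x * starRingEnd ℂ (G.swavelet ρ l' b x) ∂M = 0 := by
  rw [integral_swavelet_mul_conj hfin hZ ha hb, Finset.sum_comm]
  refine mul_eq_zero_of_right _ (Finset.sum_eq_zero fun μ' hμ' => ?_)
  have hS : G.Z l ⊆ G.cylComp l' μ' ∨ Disjoint (G.Z l) (G.cylComp l' μ') :=
    Z_subset_or_disjoint_cylComp (by rwa [mem_pathsOfDegree.1 hμ'])
  calc ∑ μ ∈ pathsOfDegree hfin (fun _ => 1),
        a μ * starRingEnd ℂ (b μ') * M.real (G.cylComp l μ ∩ G.cylComp l' μ')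
      = starRingEnd ℂ (b μ') * ∑ μ ∈ pathsOfDegree hfin (fun _ => 1),
          a μ * M.real (G.cylComp l μ ∩ G.cylComp l' μ') := by
        rw [Finset.mul_sum]
        exact Finset.sum_congr rfl fun μ _ => by ring
    _ = 0 := by rw [sum_mul_measureReal_cylComp_inter_eq_zero hfin hρ hxL hM ha hperp hS, mul_zero]

end Integrals

end KGraph

theorem stmt_17_general {k : ℕ} (G : KGraph k)
    [DecidableEq G.P]
    (hfin : G.IsRowFinite)
    [MeasurableSpace G.InfPath] (M : Measure G.InfPath) [IsProbabilityMeasure M]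
    (hZmeas : ∀ l : G.P, MeasurableSet (G.Z l))
    (xL : G.V → ℝ) (hxpos : ∀ v, 0 < xL v)
    (ρ : Fin k → ℝ) (hρpos : ∀ i, 0 < ρ i)
    (hM : ∀ l : G.P,
      M (G.Z l) = ENNReal.ofReal ((∏ i, ρ i ^ (G.d l i))⁻¹ * xL (G.s l)))
    (c : G.V → ℕ → G.P → ℂ)
    (hsupp : ∀ v m l, c v m l ≠ 0 → G.d l = (fun _ => 1) ∧ G.r l = v)
    (hperp : ∀ v m, m < G.dv v - 1 →
      ∑ᶠ l : G.P, (starRingEnd ℂ) (c v m l) * G.wt ρ xL l = 0)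
    (honb : ∀ v m m', m < G.dv v - 1 → m' < G.dv v - 1 →
      ∑ᶠ l : G.P, (starRingEnd ℂ) (c v m l) * c v m' l * G.wt ρ xL l =
        if m = m' then 1 else 0) :
    (∀ (j : ℕ) (l l' : G.P) (m m' : ℕ),
      G.d l = (fun _ => j) → G.d l' = (fun _ => j) →
      m < G.dv (G.s l) - 1 → m' < G.dv (G.s l') - 1 →
      ∫ x, G.swavelet ρ l (c (G.s l) m) x *
          (starRingEnd ℂ) (G.swavelet ρ l' (c (G.s l') m') x) ∂M =
        if l = l' ∧ m = m' then 1 else 0) ∧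
    (∀ (i j : ℕ) (l l' : G.P) (m m' : ℕ), i < j →
      G.d l = (fun _ => j) → G.d l' = (fun _ => i) →
      m < G.dv (G.s l) - 1 → m' < G.dv (G.s l') - 1 →
      ∫ x, G.swavelet ρ l (c (G.s l) m) x *
          (starRingEnd ℂ) (G.swavelet ρ l' (c (G.s l') m') x) ∂M = 0) := by
  have hxL : ∀ v, 0 ≤ xL v := fun v => (hxpos v).le
  refine ⟨fun j l l' m m' hl hl' hm hm' => ?_, fun i j l l' m m' hij hl hl' hm _ => ?_⟩
  · obtain rfl | hne := eq_or_ne l l'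
    · rw [KGraph.integral_swavelet_mul_conj_self hfin hZmeas hρpos hxL hM (hsupp _ _) (hsupp _ _),
        KGraph.weightedInner, honb _ _ _ hm hm']
      by_cases h : m = m' <;> simp [h]
    · rw [KGraph.integral_swavelet_mul_conj_eq_zero_of_ne hfin hZmeas (hl.trans hl'.symm) hne
        (hsupp _ _) (hsupp _ _), if_neg fun h => hne h.1]
  · refine KGraph.integral_swavelet_mul_conj_eq_zero_of_lt hfin hZmeas (fun i => (hρpos i).le) hxL
      hM (fun t => by simp only [hl, hl', Pi.add_apply]; omega) (hsupp _ _) (hsupp _ _) ?_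
    simpa [KGraph.weightedInner] using hperp _ _ hm

/-- Orthonormality of the shifted `k`-graph wavelets `S_λ f^{m,v}` (with
`S_λ f^{m,v} = ρ(Λ)^{d(λ)/2} Σ_{μ∈D_v} c^{m,v}_μ Θ_{λμ}` for `s(λ) = v`):
for `λ ∈ C_{j,v}`, `λ' ∈ C_{j,v'}` of equal degree `(j,…,j)`,
`∫ S_λ f^{m,v} conj(S_{λ'} f^{m',v'}) dM = δ_{λ,λ'} δ_{m,m'}`, and for
`λ ∈ C_{j,v}`, `λ' ∈ C_{i,v'}` with `j > i ≥ 0` the integral vanishes. -/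
theorem stmt_17 {k : ℕ} (G : KGraph k) [Fintype G.V] [DecidableEq G.V]
    [DecidableEq G.P]
    (hfin : G.IsRowFinite) (hsc : G.StronglyConnected)
    [MeasurableSpace G.InfPath] (M : Measure G.InfPath) [IsProbabilityMeasure M]
    (hZmeas : ∀ l : G.P, MeasurableSet (G.Z l))
    (xL : G.V → ℝ) (hxpos : ∀ v, 0 < xL v) (hx1 : ∑ v, xL v = 1)
    (ρ : Fin k → ℝ) (hρpos : ∀ i, 0 < ρ i)
    (heig : ∀ (i : Fin k) (v : G.V),
      ∑ w, (G.vertexMatrix i v w : ℝ) * xL w = ρ i * xL v)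
    (hM : ∀ l : G.P,
      M (G.Z l) = ENNReal.ofReal ((∏ i, ρ i ^ (G.d l i))⁻¹ * xL (G.s l)))
    (c : G.V → ℕ → G.P → ℂ)
    (hsupp : ∀ v m l, c v m l ≠ 0 → G.d l = (fun _ => 1) ∧ G.r l = v)
    (hperp : ∀ v m, m < G.dv v - 1 →
      ∑ᶠ l : G.P, (starRingEnd ℂ) (c v m l) * G.wt ρ xL l = 0)
    (honb : ∀ v m m', m < G.dv v - 1 → m' < G.dv v - 1 →
      ∑ᶠ l : G.P, (starRingEnd ℂ) (c v m l) * c v m' l * G.wt ρ xL l =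
        if m = m' then 1 else 0) :
    (∀ (j : ℕ) (l l' : G.P) (m m' : ℕ),
      G.d l = (fun _ => j) → G.d l' = (fun _ => j) →
      m < G.dv (G.s l) - 1 → m' < G.dv (G.s l') - 1 →
      ∫ x, G.swavelet ρ l (c (G.s l) m) x *
          (starRingEnd ℂ) (G.swavelet ρ l' (c (G.s l') m') x) ∂M =
        if l = l' ∧ m = m' then 1 else 0) ∧
    (∀ (i j : ℕ) (l l' : G.P) (m m' : ℕ), i < j →
      G.d l = (fun _ => j) → G.d l' = (fun _ => i) →
      m < G.dv (G.s l) - 1 → m' < G.dv (G.s l') - 1 →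
      ∫ x, G.swavelet ρ l (c (G.s l) m) x *
          (starRingEnd ℂ) (G.swavelet ρ l' (c (G.s l') m') x) ∂M = 0) :=
  stmt_17_general G hfin M hZmeas xL hxpos ρ hρpos hM c hsupp hperp honb
end
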